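/- Let M be a well-typed λ-term and suppose M β-reduces in one step to M' by contracting a redex whose abstraction subterm has type σ → τ. Then every type of a redex occurring in M' is either the type of some redex occurring in M, or is equal to σ, or is equal to τ. In particular, contracting a redex of type σ → τ can only create new redexes of types σ or τ. -/
import Mathlib


/-- Simple types: τ ::= o | τ → τ. -/
inductive Ty : Type
  | o : Ty
  | arrow : Ty → Ty → Ty
deriving DecidableEq

/-- Simply typed λ-terms over a set `V` of variables (each variable carries a
fixed simple type, given by a function `tyOf : V → Ty`). -/
inductive Tm (V : Type) : Type
  | var : V → Tm V
  | lam : V → Tm V → Tm V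
  | app : Tm V → Tm V → Tm V

/-- Typing relation: `x : tyOf x`; `λx.M : σ → τ` when `x : σ` and `M : τ`;
`M N : τ` when `M : σ → τ` and `N : σ`. -/
inductive HasTy {V : Type} (tyOf : V → Ty) : Tm V → Ty → Prop
  | var (x : V) : HasTy tyOf (Tm.var x) (tyOf x)
  | lam (x : V) {M : Tm V} {τ : Ty} :
      HasTy tyOf M τ → HasTy tyOf (Tm.lam x M) (Ty.arrow (tyOf x) τ)
  | app {M N : Tm V} {σ τ : Ty} :
      HasTy tyOf M (Ty.arrow σ τ) → HasTy tyOf N σ → HasTy tyOf (Tm.app M N) τ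

/-- Substitution of `N` for the free occurrences of `x`. -/
def subst {V : Type} [DecidableEq V] (x : V) (N : Tm V) : Tm V → Tm V
  | Tm.var y => if y = x then N else Tm.var y
  | Tm.lam y M => if y = x then Tm.lam y M else Tm.lam y (subst x N M)
  | Tm.app M₁ M₂ => Tm.app (subst x N M₁) (subst x N M₂)

/-- `IsSubterm N M` means that `N` occurs as a subterm of `M`. -/
inductive IsSubterm {V : Type} : Tm V → Tm V → Prop
  | refl (M : Tm V) : IsSubterm M M
  | lam {N M : Tm V} (x : V) : IsSubterm N M → IsSubterm N (Tm.lam x M)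
  | appL {N M P : Tm V} : IsSubterm N M → IsSubterm N (Tm.app M P)
  | appR {N M P : Tm V} : IsSubterm N P → IsSubterm N (Tm.app M P)

/-- `StepAt tyOf ρ M M'` : `M` β-reduces to `M'` in one step by contracting a
redex whose abstraction subterm has type `ρ`. -/
inductive StepAt {V : Type} [DecidableEq V] (tyOf : V → Ty) : Ty → Tm V → Tm V → Prop
  | beta {ρ : Ty} (x : V) (M N : Tm V) :
      HasTy tyOf (Tm.lam x M) ρ →
      StepAt tyOf ρ (Tm.app (Tm.lam x M) N) (subst x N M)
  | appL {ρ : Ty} {M M' : Tm V} (N : Tm V) :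
      StepAt tyOf ρ M M' → StepAt tyOf ρ (Tm.app M N) (Tm.app M' N)
  | appR {ρ : Ty} (M : Tm V) {N N' : Tm V} :
      StepAt tyOf ρ N N' → StepAt tyOf ρ (Tm.app M N) (Tm.app M N')
  | lam {ρ : Ty} (x : V) {M M' : Tm V} :
      StepAt tyOf ρ M M' → StepAt tyOf ρ (Tm.lam x M) (Tm.lam x M')

/-- `M` contains a redex of type `ρ`: an application subterm whose left child
is an abstraction of type `ρ`. -/
def HasRedexOfTy {V : Type} (tyOf : V → Ty) (M : Tm V) (ρ : Ty) : Prop :=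
  ∃ (x : V) (P N : Tm V),
    IsSubterm (Tm.app (Tm.lam x P) N) M ∧ HasTy tyOf (Tm.lam x P) ρ

theorem hasTy_unique {V : Type} {tyOf : V → Ty} {M : Tm V} {τ₁ τ₂ : Ty}
    (h1 : HasTy tyOf M τ₁) (h2 : HasTy tyOf M τ₂) : τ₁ = τ₂ := by
  induction h1 generalizing τ₂ with
  | var x => cases h2; rfl
  | lam x hb ih => cases h2 with | lam _ hb2 => rw [ih hb2]
  | app hf ha ihf iha => cases h2 with | app hf2 ha2 =>
      have := ihf hf2; injection this

theorem hasTy_subst {V : Type} [DecidableEq V] {tyOf : V → Ty} {x : V} {N : Tm V}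
    (hN : HasTy tyOf N (tyOf x)) :
    ∀ {P : Tm V} {τ : Ty}, HasTy tyOf P τ → HasTy tyOf (subst x N P) τ := by
  intro P τ hP
  induction hP with
  | var y =>
      simp only [subst]
      by_cases h : y = x
      · rw [if_pos h, h]; exact hN
      · rw [if_neg h]; exact HasTy.var y
  | lam y hb ih =>
      simp only [subst]
      by_cases h : y = x
      · rw [if_pos h]; exact HasTy.lam y hb
      · rw [if_neg h]; exact HasTy.lam y ih
  | app hf ha ihf iha =>
      exact HasTy.app ihf iha

theorem step_preserves {V : Type} [DecidableEq V] {tyOf : V → Ty} {ρ : Ty}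
    {P P' : Tm V} (h : StepAt tyOf ρ P P') :
    ∀ {τ : Ty}, HasTy tyOf P τ → HasTy tyOf P' τ := by
  induction h with
  | beta x M N hlam =>
      intro τ ht
      cases ht with | app hf ha =>
      cases hf with | lam _ hb =>
      exact hasTy_subst ha hb
  | appL N _ ih =>
      intro τ ht; cases ht with | app hf ha => exact HasTy.app (ih hf) ha
  | appR M _ ih =>
      intro τ ht; cases ht with | app hf ha => exact HasTy.app hf (ih ha)
  | lam x _ ih =>
      intro τ ht; cases ht with | lam _ hb => exact HasTy.lam x (ih hb)

theorem redex_appL {V : Type} {tyOf : V → Ty} {A B : Tm V} {ρ : Ty}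
    (h : HasRedexOfTy tyOf A ρ) : HasRedexOfTy tyOf (Tm.app A B) ρ := by
  obtain ⟨y, P, N, hs, ht⟩ := h; exact ⟨y, P, N, IsSubterm.appL hs, ht⟩

theorem redex_appR {V : Type} {tyOf : V → Ty} {A B : Tm V} {ρ : Ty}
    (h : HasRedexOfTy tyOf B ρ) : HasRedexOfTy tyOf (Tm.app A B) ρ := by
  obtain ⟨y, P, N, hs, ht⟩ := h; exact ⟨y, P, N, IsSubterm.appR hs, ht⟩

theorem redex_lam {V : Type} {tyOf : V → Ty} {A : Tm V} (x : V) {ρ : Ty}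
    (h : HasRedexOfTy tyOf A ρ) : HasRedexOfTy tyOf (Tm.lam x A) ρ := by
  obtain ⟨y, P, N, hs, ht⟩ := h; exact ⟨y, P, N, IsSubterm.lam x hs, ht⟩

/-- Redexes in `P[N/x]` are redexes of `P`, redexes of `N`, or of type `tyOf x`. -/
theorem redex_subst {V : Type} [DecidableEq V] {tyOf : V → Ty} {x : V} {N : Tm V}
    (hN : HasTy tyOf N (tyOf x)) :
    ∀ (P : Tm V) {τP : Ty}, HasTy tyOf P τP → ∀ {ρ : Ty},
      HasRedexOfTy tyOf (subst x N P) ρ →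
      HasRedexOfTy tyOf P ρ ∨ HasRedexOfTy tyOf N ρ ∨ ρ = tyOf x := by
  intro P
  induction P with
  | var y =>
      intro τP hP ρ hr
      by_cases h : y = x
      · simp only [subst, if_pos h] at hr; exact Or.inr (Or.inl hr)
      · simp only [subst, if_neg h] at hr
        obtain ⟨z, Q, R, hs, _⟩ := hr
        cases hs
  | lam y Q ih =>
      intro τP hP ρ hr
      by_cases h : y = x
      · simp only [subst, if_pos h] at hr; exact Or.inl hr
      · simp only [subst, if_neg h] at hr
        obtain ⟨z, Q', R, hs, ht⟩ := hr
        cases hs with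
        | lam _ hs' =>
            cases hP with | lam _ hb =>
            rcases ih hb ⟨z, Q', R, hs', ht⟩ with h1 | h1 | h1
            · exact Or.inl (redex_lam y h1)
            · exact Or.inr (Or.inl h1)
            · exact Or.inr (Or.inr h1)
  | app P₁ P₂ ih₁ ih₂ =>
      intro τP hP ρ hr
      cases hP with | app hf ha =>
      simp only [subst] at hr
      obtain ⟨z, Q', R, hs, ht⟩ := hr
      generalize hq1 : subst x N P₁ = s1 at hs
      generalize hq2 : subst x N P₂ = s2 at hs
      cases hs with
      | refl =>
          -- hq1 : subst x N P₁ = Tm.lam z Q'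
          cases P₁ with
          | var w =>
              by_cases hw : w = x
              · simp only [subst, if_pos hw] at hq1
                have hNρ : HasTy tyOf N ρ := hq1 ▸ ht
                exact Or.inr (Or.inr (hasTy_unique hNρ hN))
              · simp only [subst, if_neg hw] at hq1
                cases hq1
          | lam w Q =>
              have h1 : HasTy tyOf (Tm.lam z Q') _ := hq1 ▸ hasTy_subst hN hf
              have hρ := hasTy_unique h1 ht
              exact Or.inl ⟨w, Q, P₂, IsSubterm.refl _, hρ ▸ hf⟩
          | app A B =>
              simp only [subst] at hq1
              cases hq1
      | appL hs' =>
          rcases ih₁ hf ⟨z, Q', R, hq1 ▸ hs', ht⟩ with h1 | h1 | h1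
          · exact Or.inl (redex_appL h1)
          · exact Or.inr (Or.inl h1)
          · exact Or.inr (Or.inr h1)
      | appR hs' =>
          rcases ih₂ ha ⟨z, Q', R, hq2 ▸ hs', ht⟩ with h1 | h1 | h1
          · exact Or.inl (redex_appR h1)
          · exact Or.inr (Or.inl h1)
          · exact Or.inr (Or.inr h1)

theorem redex_aux {V : Type} [DecidableEq V] {tyOf : V → Ty} {σ τ : Ty}
    {M M' : Tm V} (hstep : StepAt tyOf (Ty.arrow σ τ) M M') :
    ∀ {τ₀ : Ty}, HasTy tyOf M τ₀ → ∀ {ρ : Ty}, HasRedexOfTy tyOf M' ρ →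
      HasRedexOfTy tyOf M ρ ∨ ρ = σ ∨ ρ = τ := by
  induction hstep with
  | beta x B N hlam =>
      intro τ₀ hM₀ ρ hr
      cases hM₀ with | app hf ha =>
      have heq := hasTy_unique hf hlam
      injection heq with h1 h2
      subst h1; subst h2
      cases hlam with | lam _ hb =>
      rcases redex_subst ha B hb hr with h | h | h
      · exact Or.inl (redex_appL (redex_lam x h))
      · exact Or.inl (redex_appR h)
      · exact Or.inr (Or.inl h)
  | appL C hst ih =>
      intro τ₀ hM₀ ρ hr
      cases hM₀ with | app hf ha =>
      obtain ⟨z, Q', R, hs, ht⟩ := hr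
      cases hs with
      | refl =>
          -- the step's target is the abstraction Tm.lam z Q'
          generalize hA : Tm.lam z Q' = A'' at hst
          have hsr := step_preserves hst hf
          cases hst with
          | beta x B D hl =>
              cases hf with | app hf1 hf2 =>
              have h2 := hasTy_unique hl hf1
              injection h2 with h2a h2b
              have hρ := hasTy_unique ht (hA ▸ hsr)
              exact Or.inr (Or.inr (hρ.trans h2b.symm))
          | appL _ _ => cases hA
          | appR _ _ => cases hA
          | lam y hst' =>
              have hρ := hasTy_unique ht (hA ▸ hsr)
              exact Or.inl ⟨_, _, _, IsSubterm.refl _, hρ ▸ hf⟩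
      | appL hs' =>
          rcases ih hf ⟨z, Q', R, hs', ht⟩ with h | h | h
          · exact Or.inl (redex_appL h)
          · exact Or.inr (Or.inl h)
          · exact Or.inr (Or.inr h)
      | appR hs' =>
          exact Or.inl (redex_appR ⟨z, Q', R, hs', ht⟩)
  | appR A hst ih =>
      intro τ₀ hM₀ ρ hr
      cases hM₀ with | app hf ha =>
      obtain ⟨z, Q', R, hs, ht⟩ := hr
      cases hs with
      | refl =>
          exact Or.inl ⟨z, Q', _, IsSubterm.refl _, ht⟩
      | appL hs' =>
          exact Or.inl (redex_appL ⟨z, Q', R, hs', ht⟩)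
      | appR hs' =>
          rcases ih ha ⟨z, Q', R, hs', ht⟩ with h | h | h
          · exact Or.inl (redex_appR h)
          · exact Or.inr (Or.inl h)
          · exact Or.inr (Or.inr h)
  | lam y hst ih =>
      intro τ₀ hM₀ ρ hr
      cases hM₀ with | lam _ hb =>
      obtain ⟨z, Q', R, hs, ht⟩ := hr
      cases hs with
      | lam _ hs' =>
          rcases ih hb ⟨z, Q', R, hs', ht⟩ with h | h | h
          · exact Or.inl (redex_lam y h)
          · exact Or.inr (Or.inl h)
          · exact Or.inr (Or.inr h)

/-- If a well-typed `M` reduces to `M'` by contracting a redex of type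
`σ → τ`, then every redex type of `M'` is a redex type of `M`, or `σ`, or `τ`:
contracting a redex of type `σ → τ` only creates redexes of types `σ` or `τ`. -/
theorem redex_types_after_step {V : Type} [DecidableEq V] (tyOf : V → Ty)
    (M M' : Tm V) (σ τ : Ty)
    (hM : ∃ τ₀ : Ty, HasTy tyOf M τ₀)
    (hstep : StepAt tyOf (Ty.arrow σ τ) M M') :
    ∀ ρ : Ty, HasRedexOfTy tyOf M' ρ →
      HasRedexOfTy tyOf M ρ ∨ ρ = σ ∨ ρ = τ := by
  obtain ⟨τ₀, hM₀⟩ := hM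
  intro ρ hr
  exact redex_aux hstep hM₀ hr
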